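/- Let F be a family of graphs containing K_n and \overline{K_m}, let R be the minimal number such that every graph on at least R vertices fails to be F-free, let D be an F-free graph on R−1 vertices with the maximum number of edges among such graphs, and suppose D has no universal vertex. Then for the graph G = K_t ∇ D (t ≥ 1), the set X = V(K_t) is the unique minimum-size vertex set whose deletion makes G F-free. -/
import Mathlib


open SimpleGraph

/-- The join of two graphs on disjoint vertex sets. -/
def graphJoin {V₁ V₂ : Type*} (G₁ : SimpleGraph V₁) (G₂ : SimpleGraph V₂) :
    SimpleGraph (V₁ ⊕ V₂) :=
  SimpleGraph.fromRel (fun x y =>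
    match x, y with
    | Sum.inl a, Sum.inl b => G₁.Adj a b
    | Sum.inr a, Sum.inr b => G₂.Adj a b
    | _, _ => True)

/-- `G` is `F`-free for a family `F` of finite graphs: no induced subgraph of `G`
is isomorphic to any member of `F`. -/
def FamFree {α : Type*} (G : SimpleGraph α) (F : Set (Σ n : ℕ, SimpleGraph (Fin n))) : Prop :=
  ∀ H ∈ F, ∀ s : Set α, IsEmpty ((G.induce s) ≃g H.2)

/-- `FamFree` transports along graph isomorphisms. -/
lemma famFree_of_iso {α β : Type*} {F : Set (Σ n : ℕ, SimpleGraph (Fin n))}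
    {G : SimpleGraph α} {G' : SimpleGraph β} (e : G ≃g G') (h : FamFree G' F) :
    FamFree G F := by
  intro H hH s
  constructor
  intro φ
  have ψ : G.induce s ≃g G'.induce (⇑e '' s) := by
    refine ⟨Equiv.image e.toEquiv s, ?_⟩
    rintro ⟨a, ha⟩ ⟨b, hb⟩
    exact e.map_rel_iff
  exact (h H hH (⇑e '' s)).false (ψ.symm.trans φ)

/-- `F` contains a clique `K n` and an independent set `K̄ m`; `R` is the minimal number
such that every graph on at least `R` vertices fails to be `F`-free; `D` is an `F`-free
graph on `R - 1` vertices with the maximum number of edges among such graphs, and `D` has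
no universal vertex.  Then for `G = K t ∇ D` (with `t ≥ 1`), the vertex set of `K t`
is the unique minimum-size vertex set whose deletion makes `G` `F`-free. -/
theorem stmt16 (F : Set (Σ n : ℕ, SimpleGraph (Fin n)))
    (hK : ∃ n : ℕ, ∃ H ∈ F, Nonempty (H.2 ≃g (⊤ : SimpleGraph (Fin n))))
    (hI : ∃ m : ℕ, ∃ H ∈ F, Nonempty (H.2 ≃g (⊥ : SimpleGraph (Fin m))))
    (R : ℕ)
    (hR : ∀ n : ℕ, R ≤ n → ∀ G : SimpleGraph (Fin n), ¬ FamFree G F)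
    (hRmin : ∀ R' : ℕ, (∀ n : ℕ, R' ≤ n → ∀ G : SimpleGraph (Fin n), ¬ FamFree G F) → R ≤ R')
    (D : SimpleGraph (Fin (R - 1))) (hD : FamFree D F)
    (hDmax : ∀ D' : SimpleGraph (Fin (R - 1)), FamFree D' F →
      D'.edgeSet.ncard ≤ D.edgeSet.ncard)
    (hUniv : ∀ v : Fin (R - 1), ∃ w : Fin (R - 1), w ≠ v ∧ ¬ D.Adj v w)
    (t : ℕ) (ht : 1 ≤ t) :
    FamFree ((graphJoin (⊤ : SimpleGraph (Fin t)) D).induce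
        (Set.range (Sum.inl : Fin t → Fin t ⊕ Fin (R - 1)))ᶜ) F ∧
      ∀ Y : Set (Fin t ⊕ Fin (R - 1)),
        FamFree ((graphJoin (⊤ : SimpleGraph (Fin t)) D).induce Yᶜ) F →
        Y ≠ Set.range Sum.inl →
        (Set.range (Sum.inl : Fin t → Fin t ⊕ Fin (R - 1))).ncard < Y.ncard := by
  classical
  set J := graphJoin (⊤ : SimpleGraph (Fin t)) D with hJdef
  -- adjacency lemmas for the join
  have jadj_inl : ∀ (a : Fin t) (x : Fin t ⊕ Fin (R - 1)), x ≠ Sum.inl a →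
      J.Adj (Sum.inl a) x := by
    intro a x hx
    cases x with
    | inl b =>
      have hba : a ≠ b := fun h => hx (by rw [h])
      exact ⟨by simpa using hba, Or.inl (by simpa using hba)⟩
    | inr b =>
      exact ⟨by simp, Or.inl trivial⟩
  have jadj_inr : ∀ u v : Fin (R - 1), J.Adj (Sum.inr u) (Sum.inr v) ↔ D.Adj u v := by
    intro u v
    constructor
    · rintro ⟨hne, h | h⟩
      · exact h
      · exact h.symm
    · intro h
      exact ⟨by simpa using h.ne, Or.inl h⟩
  -- R ≥ 1
  have hR1 : 1 ≤ R := by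
    by_contra h
    exact hR (R - 1) (by omega) D hD
  -- any F-free induced subgraph has at most R - 1 vertices
  have key : ∀ Z : Set (Fin t ⊕ Fin (R - 1)), FamFree (J.induce Z) F → Z.ncard ≤ R - 1 := by
    intro Z hZ
    by_contra hlt
    push_neg at hlt
    haveI := (Set.toFinite Z).fintype
    have hcard : Fintype.card Z = Z.ncard := by
      rw [← Nat.card_coe_set_eq, Nat.card_eq_fintype_card]
    have e : ↥Z ≃ Fin Z.ncard := Fintype.equivFinOfCardEq hcard
    have hfree : FamFree ((J.induce Z).comap ⇑e.symm.toEmbedding) F :=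
      famFree_of_iso (Iso.comap e.symm (J.induce Z)) hZ
    exact hR Z.ncard (by omega) _ hfree
  -- cardinality of the clique part
  have hXcard : (Set.range (Sum.inl : Fin t → Fin t ⊕ Fin (R - 1))).ncard = t := by
    rw [← Nat.card_coe_set_eq, Nat.card_range_of_injective Sum.inl_injective,
      Nat.card_eq_fintype_card, Fintype.card_fin]
  -- part 1 : deleting the clique leaves (a copy of) D, which is F-free
  have hs : (Set.range (Sum.inl : Fin t → Fin t ⊕ Fin (R - 1)))ᶜ = Set.range Sum.inr :=
    Set.compl_range_inl
  have φ : (J.induce (Set.range (Sum.inl : Fin t → Fin t ⊕ Fin (R - 1)))ᶜ) ≃g D :=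
    { toFun := fun x => match x with
        | ⟨Sum.inl a, h⟩ => absurd (Set.mem_range_self a) h
        | ⟨Sum.inr v, _⟩ => v
      invFun := fun v => ⟨Sum.inr v, by simp⟩
      left_inv := fun x => match x with
        | ⟨Sum.inl a, h⟩ => absurd (Set.mem_range_self a) h
        | ⟨Sum.inr v, _⟩ => rfl
      right_inv := fun v => rfl
      map_rel_iff' := @fun x y => match x, y with
        | ⟨Sum.inl a, h⟩, _ => absurd (Set.mem_range_self a) h
        | ⟨Sum.inr _, _⟩, ⟨Sum.inl a, h⟩ => absurd (Set.mem_range_self a) h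
        | ⟨Sum.inr u, _⟩, ⟨Sum.inr v, _⟩ => (jadj_inr u v).symm }
  have part1 : FamFree (J.induce (Set.range (Sum.inl : Fin t → Fin t ⊕ Fin (R - 1)))ᶜ) F :=
    famFree_of_iso φ hD
  refine ⟨part1, ?_⟩
  -- part 2
  intro Y hY hne
  have hYc : Yᶜ.ncard ≤ R - 1 := key Yᶜ hY
  have htot : Y.ncard + Yᶜ.ncard = t + (R - 1) := by
    rw [Set.ncard_add_ncard_compl, Nat.card_eq_fintype_card, Fintype.card_sum,
      Fintype.card_fin, Fintype.card_fin]
  have hge : t ≤ Y.ncard := by omega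
  rw [hXcard]
  by_contra hcon
  push_neg at hcon
  have hYt : Y.ncard = t := le_antisymm hcon hge
  -- there is a clique vertex outside Y
  have ha : ∃ a : Fin t, Sum.inl a ∉ Y := by
    by_contra h
    push_neg at h
    have hsub : Set.range (Sum.inl : Fin t → Fin t ⊕ Fin (R - 1)) ⊆ Y := by
      rintro _ ⟨a, rfl⟩; exact h a
    have : Set.range (Sum.inl : Fin t → Fin t ⊕ Fin (R - 1)) = Y :=
      Set.eq_of_subset_of_ncard_le hsub (by rw [hXcard, hYt]) (Set.toFinite _)
    exact hne this.symm
  obtain ⟨a, hax⟩ := ha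
  -- Y contains a vertex of D
  have hb : ∃ b : Fin (R - 1), Sum.inr b ∈ Y := by
    by_contra h
    push_neg at h
    have hsub : Y ⊆ Set.range (Sum.inl : Fin t → Fin t ⊕ Fin (R - 1)) := by
      intro x hx
      cases x with
      | inl c => exact ⟨c, rfl⟩
      | inr v => exact absurd hx (h v)
    have : Y = Set.range (Sum.inl : Fin t → Fin t ⊕ Fin (R - 1)) :=
      Set.eq_of_subset_of_ncard_le hsub (by rw [hXcard, hYt]) (Set.toFinite _)
    exact hne this
  obtain ⟨b, hbY⟩ := hb
  -- Finset bookkeeping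
  set Sf : Finset (Fin (R - 1)) := Finset.univ.filter (fun v => Sum.inr v ∈ Y) with hSf
  set Af : Finset (Fin t) := Finset.univ.filter (fun c => Sum.inl c ∉ Y) with hAf
  set Lf : Finset (Fin t) := Finset.univ.filter (fun c => Sum.inl c ∈ Y) with hLf
  haveI := (Set.toFinite Y).fintype
  have hYdecomp : Y.toFinset = Lf.image Sum.inl ∪ Sf.image Sum.inr := by
    ext x
    cases x with
    | inl c => simp [hLf, hSf]
    | inr v => simp [hLf, hSf]
  have hLS : Lf.card + Sf.card = t := by
    have h1 : Y.toFinset.card = Y.ncard := (Set.ncard_eq_toFinset_card' Y).symm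
    have hdisj : Disjoint (Lf.image Sum.inl) (Sf.image Sum.inr) := by
      rw [Finset.disjoint_left]
      rintro x hx hx'
      simp only [Finset.mem_image] at hx hx'
      obtain ⟨c, _, rfl⟩ := hx
      obtain ⟨v, _, hv⟩ := hx'
      exact absurd hv (by simp)
    have h2 : (Lf.image Sum.inl ∪ Sf.image Sum.inr).card = Lf.card + Sf.card := by
      rw [Finset.card_union_of_disjoint hdisj,
        Finset.card_image_of_injective _ Sum.inl_injective,
        Finset.card_image_of_injective _ Sum.inr_injective]
    rw [← h2, ← hYdecomp, h1, hYt]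
  have hLA : Lf.card + Af.card = t := by
    have := Finset.card_filter_add_card_filter_not
      (s := (Finset.univ : Finset (Fin t))) (p := fun c => Sum.inl c ∈ Y)
    simpa [hLf, hAf] using this
  have hSA : Sf.card = Af.card := by omega
  have σ : ↥Sf ≃ ↥Af := Finset.equivOfCardEq hSA
  -- the injective map g from the vertices of D into Yᶜ
  have memA : ∀ c : Fin t, c ∈ Af → Sum.inl c ∈ Yᶜ := by
    intro c hc
    rw [hAf, Finset.mem_filter] at hc
    exact hc.2
  set g : Fin (R - 1) → ↥(Yᶜ) := fun u =>
    if h : u ∈ Sf then ⟨Sum.inl ↑(σ ⟨u, h⟩), memA _ (σ ⟨u, h⟩).2⟩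
    else ⟨Sum.inr u, by
      rw [hSf, Finset.mem_filter] at h
      simpa using h⟩ with hgdef
  have hgpos : ∀ (u : Fin (R - 1)) (h : u ∈ Sf),
      (g u : Fin t ⊕ Fin (R - 1)) = Sum.inl ↑(σ ⟨u, h⟩) := by
    intro u h
    rw [hgdef]
    simp only
    rw [dif_pos h]
  have hgneg : ∀ (u : Fin (R - 1)) (h : u ∉ Sf),
      (g u : Fin t ⊕ Fin (R - 1)) = Sum.inr u := by
    intro u h
    rw [hgdef]
    simp only
    rw [dif_neg h]
  have hginj : Function.Injective g := by
    intro u v huv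
    have hval : (g u : Fin t ⊕ Fin (R - 1)) = (g v : Fin t ⊕ Fin (R - 1)) :=
      congrArg Subtype.val huv
    by_cases hu : u ∈ Sf <;> by_cases hv : v ∈ Sf
    · rw [hgpos u hu, hgpos v hv] at hval
      have : σ ⟨u, hu⟩ = σ ⟨v, hv⟩ := Subtype.ext (Sum.inl_injective hval)
      have := σ.injective this
      exact congrArg Subtype.val this
    · rw [hgpos u hu, hgneg v hv] at hval
      exact absurd hval (by simp)
    · rw [hgneg u hu, hgpos v hv] at hval
      exact absurd hval (by simp)
    · rw [hgneg u hu, hgneg v hv] at hval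
      exact Sum.inr_injective hval
  have hgne : ∀ u v : Fin (R - 1), u ≠ v →
      (g u : Fin t ⊕ Fin (R - 1)) ≠ (g v : Fin t ⊕ Fin (R - 1)) := by
    intro u v h hh
    exact h (hginj (Subtype.ext hh))
  have hmap : ∀ u v : Fin (R - 1), D.Adj u v → (J.induce Yᶜ).Adj (g u) (g v) := by
    intro u v huv
    show J.Adj ↑(g u) ↑(g v)
    by_cases hu : u ∈ Sf
    · rw [hgpos u hu]
      refine jadj_inl _ _ ?_
      rw [← hgpos u hu]
      exact (hgne u v huv.ne).symm
    · by_cases hv : v ∈ Sf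
      · refine ((?_ : J.Adj ↑(g v) ↑(g u))).symm
        rw [hgpos v hv]
        refine jadj_inl _ _ ?_
        rw [← hgpos v hv]
        exact hgne u v huv.ne
      · rw [hgneg u hu, hgneg v hv]
        exact (jadj_inr u v).mpr huv
  -- the graph on Fin (R-1) isomorphic to the deletion of Y
  have hYccard : Yᶜ.ncard = R - 1 := by omega
  haveI := (Set.toFinite Yᶜ).fintype
  have hYcfin : Fintype.card ↥(Yᶜ) = R - 1 := by
    rw [← Nat.card_eq_fintype_card, Nat.card_coe_set_eq, hYccard]
  have e0 : Fin (R - 1) ≃ ↥(Yᶜ) := (Fintype.equivFinOfCardEq hYcfin).symm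
  set D' : SimpleGraph (Fin (R - 1)) := (J.induce Yᶜ).comap ⇑e0.toEmbedding with hD'def
  have hD'free : FamFree D' F := famFree_of_iso (Iso.comap e0 (J.induce Yᶜ)) hY
  set g' : Fin (R - 1) → Fin (R - 1) := fun u => e0.symm (g u) with hg'def
  have hg'inj : Function.Injective g' := fun x y h => hginj (e0.symm.injective h)
  have hD'adj : ∀ u v : Fin (R - 1), D.Adj u v → D'.Adj (g' u) (g' v) := by
    intro u v huv
    show (J.induce Yᶜ).Adj (e0 (e0.symm (g u))) (e0 (e0.symm (g v)))
    rw [Equiv.apply_symm_apply, Equiv.apply_symm_apply]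
    exact hmap u v huv
  obtain ⟨gD, hgD⟩ : ∃ gD : D →g D', ⇑gD = g' :=
    ⟨⟨g', fun {u v} h => hD'adj u v h⟩, rfl⟩
  -- the missing edge
  obtain ⟨w, hwb, hbw⟩ := hUniv b
  have hbS : b ∈ Sf := by rw [hSf, Finset.mem_filter]; exact ⟨Finset.mem_univ _, hbY⟩
  have hm : D'.Adj (g' b) (g' w) := by
    show (J.induce Yᶜ).Adj (e0 (e0.symm (g b))) (e0 (e0.symm (g w)))
    rw [Equiv.apply_symm_apply, Equiv.apply_symm_apply]
    show J.Adj ↑(g b) ↑(g w)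
    rw [hgpos b hbS]
    refine jadj_inl _ _ ?_
    rw [← hgpos b hbS]
    exact (hgne b w (Ne.symm hwb)).symm
  have hmedge : s(g' b, g' w) ∈ D'.edgeSet := hm
  -- counting
  haveI instD : Fintype ↥D.edgeSet := Fintype.ofFinite _
  haveI instD' : Fintype ↥D'.edgeSet := Fintype.ofFinite _
  have hnotmem : (⟨s(g' b, g' w), hmedge⟩ : ↥D'.edgeSet) ∉ Set.range (Hom.mapEdgeSet gD) := by
    rintro ⟨⟨e, he⟩, hfe⟩
    have hval : Sym2.map ⇑gD e = s(g' b, g' w) := congrArg Subtype.val hfe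
    rw [hgD] at hval
    have hval2 : Sym2.map g' e = Sym2.map g' s(b, w) := by
      rw [Sym2.map_pair_eq]
      exact hval
    have heq : e = s(b, w) := Sym2.map.injective hg'inj hval2
    rw [heq] at he
    exact hbw he
  have hgDinj : Function.Injective ⇑gD := by rw [hgD]; exact hg'inj
  have hlt : Fintype.card ↥D.edgeSet < Fintype.card ↥D'.edgeSet :=
    Fintype.card_lt_of_injective_of_notMem (Hom.mapEdgeSet gD)
      (Hom.mapEdgeSet.injective gD hgDinj) hnotmem
  have h1 : D.edgeSet.ncard = Fintype.card ↥D.edgeSet := by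
    rw [← Nat.card_coe_set_eq, Nat.card_eq_fintype_card]
  have h2 : D'.edgeSet.ncard = Fintype.card ↥D'.edgeSet := by
    rw [← Nat.card_coe_set_eq, Nat.card_eq_fintype_card]
  have := hDmax D' hD'free
  omega
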